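/- arXiv:1709.03418 — 4 statements merged into one kernel-verified Lean document; each statement's English description precedes it below -/
import Mathlib

section
/- Let Γ be a symmetric n×n real matrix with entries Γ_{ij} = σ²h(i∧j) + (1/2)h^{2H}(i^{2H} + j^{2H} − |i−j|^{2H}) for 1 ≤ i,j ≤ n, where σ > 0, h > 0 and H ∈ (1/2,1). Then the largest eigenvalue λ_max of Γ satisfies λ_max ≤ C·n^{2H+1} for some constant C > 0 depending only on σ, h, H. -/
/-!
By Gershgorin's theorem every eigenvalue of the symmetric matrix `Γ` is bounded in absolute value
by a row sum `∑ⱼ |Γₖⱼ|`. Each entry is at most `(σ²h + 3/2 h^{2H}) n^{2H}`, because all of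
`min(s, t)`, `s^{2H}`, `t^{2H}`, `|s - t|^{2H}` are at most `n^{2H}` when `s, t ∈ [0, n]` and
`2H ≥ 1`; summing `n` such entries gives the bound `C n^{2H+1}`.
-/

open Matrix Finset

namespace Matrix.IsHermitian

variable {ι 𝕜 : Type*} [Fintype ι] [DecidableEq ι] [RCLike 𝕜] {A : Matrix ι ι 𝕜}

theorem hasEigenvalue_toLin'_eigenvalues (hA : A.IsHermitian) (i : ι) :
    Module.End.HasEigenvalue (toLin' A) (hA.eigenvalues i : 𝕜) := by
  refine Module.End.hasEigenvalue_of_hasEigenvector (x := ⇑(hA.eigenvectorBasis i)) ⟨?_, ?_⟩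
  · rw [Module.End.mem_eigenspace_iff, toLin'_apply, hA.mulVec_eigenvectorBasis,
      RCLike.real_smul_eq_coe_smul (K := 𝕜)]
  · intro hv
    exact hA.eigenvectorBasis.orthonormal.ne_zero i (by ext j; exact congrFun hv j)

theorem abs_eigenvalues_le_of_sum_norm_le (hA : A.IsHermitian) {B : ℝ}
    (hB : ∀ k, ∑ j, ‖A k j‖ ≤ B) (i : ι) : |hA.eigenvalues i| ≤ B := by
  obtain ⟨k, hk⟩ := eigenvalue_mem_ball (hA.hasEigenvalue_toLin'_eigenvalues i)
  rw [mem_closedBall_iff_norm] at hk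
  calc |hA.eigenvalues i| = ‖(hA.eigenvalues i : 𝕜)‖ := (RCLike.norm_ofReal _).symm
    _ ≤ ‖A k k‖ + ‖(hA.eigenvalues i : 𝕜) - A k k‖ := norm_le_insert' _ _
    _ ≤ ‖A k k‖ + ∑ j ∈ univ.erase k, ‖A k j‖ := by gcongr
    _ = ∑ j, ‖A k j‖ := add_sum_erase _ (fun j ↦ ‖A k j‖) (mem_univ k)
    _ ≤ B := hB k

end Matrix.IsHermitian

/-- The covariance of `σ W + B^H` at the times `s h` and `t h`. -/
noncomputable def mixedFBMCov (σ h H s t : ℝ) : ℝ :=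
  σ ^ 2 * h * min s t + 1 / 2 * h ^ (2 * H) * (s ^ (2 * H) + t ^ (2 * H) - |s - t| ^ (2 * H))

theorem abs_mixedFBMCov_le {σ h H s t N : ℝ} (hh : 0 ≤ h) (hH : 1 ≤ 2 * H) (hN : 1 ≤ N)
    (hs : 0 ≤ s) (ht : 0 ≤ t) (hsN : s ≤ N) (htN : t ≤ N) :
    |mixedFBMCov σ h H s t| ≤ (σ ^ 2 * h + 3 / 2 * h ^ (2 * H)) * N ^ (2 * H) := by
  have hH₀ : 0 ≤ 2 * H := by linarith
  have hN_le : N ≤ N ^ (2 * H) := by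
    simpa using Real.rpow_le_rpow_of_exponent_le hN hH
  have hmin : min s t ≤ N ^ (2 * H) := (min_le_left s t).trans (hsN.trans hN_le)
  have hdiff : |s - t| ≤ N := abs_sub_le_iff.2 ⟨by linarith, by linarith⟩
  have hsH := Real.rpow_le_rpow hs hsN hH₀
  have htH := Real.rpow_le_rpow ht htN hH₀
  have hdH := Real.rpow_le_rpow (abs_nonneg _) hdiff hH₀
  have hsH₀ := Real.rpow_nonneg hs (2 * H)
  have htH₀ := Real.rpow_nonneg ht (2 * H)
  have hdH₀ := Real.rpow_nonneg (abs_nonneg (s - t)) (2 * H)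
  have hσh : 0 ≤ σ ^ 2 * h := by positivity
  have hfrac : |s ^ (2 * H) + t ^ (2 * H) - |s - t| ^ (2 * H)| ≤ 3 * N ^ (2 * H) :=
    abs_le.2 ⟨by linarith, by linarith⟩
  unfold mixedFBMCov
  calc _ ≤ |σ ^ 2 * h * min s t| + |1 / 2 * h ^ (2 * H) *
        (s ^ (2 * H) + t ^ (2 * H) - |s - t| ^ (2 * H))| := abs_add_le _ _
    _ ≤ σ ^ 2 * h * N ^ (2 * H) + 1 / 2 * h ^ (2 * H) * (3 * N ^ (2 * H)) := by
      rw [abs_mul (σ ^ 2 * h), abs_mul (1 / 2 * h ^ (2 * H)), abs_of_nonneg hσh,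
        abs_of_nonneg (le_min hs ht), abs_of_nonneg (by positivity : (0 : ℝ) ≤ 1 / 2 * h ^ (2 * H))]
      gcongr
    _ = _ := by ring

theorem stmt_3_general (σ h H : ℝ) (hh : 0 < h) (hH1 : 1/2 < H) :
    ∃ C > (0 : ℝ), ∀ (n : ℕ) (Γ : Matrix (Fin n) (Fin n) ℝ),
      (∀ i j : Fin n, Γ i j =
        σ ^ 2 * h * (min ((i : ℝ) + 1) ((j : ℝ) + 1)) +
          (1 / 2) * h ^ (2 * H) *
            (((i : ℝ) + 1) ^ (2 * H) + ((j : ℝ) + 1) ^ (2 * H)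
              - |(i : ℝ) - (j : ℝ)| ^ (2 * H))) →
      ∀ (hΓ : Γ.IsHermitian) (i : Fin n),
        hΓ.eigenvalues i ≤ C * (n : ℝ) ^ (2 * H + 1) := by
  set C := σ ^ 2 * h + 3 / 2 * h ^ (2 * H)
  refine ⟨C, by positivity, fun n Γ hΓ_eq hΓ i ↦ ?_⟩
  have hn : (1 : ℝ) ≤ n := by exact_mod_cast Fin.pos i
  have hentry (k j : Fin n) : ‖Γ k j‖ ≤ C * (n : ℝ) ^ (2 * H) := by
    have hΓ_cov : Γ k j = mixedFBMCov σ h H (k + 1) (j + 1) := by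
      rw [hΓ_eq, mixedFBMCov, add_sub_add_right_eq_sub]
    rw [Real.norm_eq_abs, hΓ_cov]
    exact abs_mixedFBMCov_le hh.le (by linarith) hn (by positivity) (by positivity)
      (by exact_mod_cast k.isLt) (by exact_mod_cast j.isLt)
  have hrow (k : Fin n) : ∑ j, ‖Γ k j‖ ≤ n * (C * (n : ℝ) ^ (2 * H)) := by
    simpa using sum_le_card_nsmul univ _ _ fun j _ ↦ hentry k j
  calc hΓ.eigenvalues i ≤ |hΓ.eigenvalues i| := le_abs_self _
    _ ≤ n * (C * (n : ℝ) ^ (2 * H)) := hΓ.abs_eigenvalues_le_of_sum_norm_le hrow i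
    _ = C * (n : ℝ) ^ (2 * H + 1) := by
      rw [Real.rpow_add_one (by positivity)]; ring

theorem stmt_3 (σ h H : ℝ) (hσ : 0 < σ) (hh : 0 < h) (hH1 : 1/2 < H) (hH2 : H < 1) :
    ∃ C > (0 : ℝ), ∀ (n : ℕ) (Γ : Matrix (Fin n) (Fin n) ℝ),
      (∀ i j : Fin n, Γ i j =
        σ ^ 2 * h * (min ((i : ℝ) + 1) ((j : ℝ) + 1)) +
          (1 / 2) * h ^ (2 * H) *
            (((i : ℝ) + 1) ^ (2 * H) + ((j : ℝ) + 1) ^ (2 * H)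
              - |(i : ℝ) - (j : ℝ)| ^ (2 * H))) →
      ∀ (hΓ : Γ.IsHermitian) (i : Fin n),
        hΓ.eigenvalues i ≤ C * (n : ℝ) ^ (2 * H + 1) :=
  stmt_3_general σ h H hh hH1
end

section
/- Let g : [0,T]×[0,T] → ℝ be continuously differentiable and satisfy, for all 0 ≤ s ≤ t ≤ T, the identity σ² g(s,t) + H(2H−1)∫₀ᵗ g(r,t)|r−s|^{2H−2} dr = σ, with σ > 0 and H ∈ (1/2,1). Then for all t ∈ [0,T], (d/dt) ∫₀ᵗ g(s,t) ds = σ g(t,t)². -/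
/-!
Write `∂g` for `∂g/∂t` and `A_t f (s) = σ² f(s) + c ∫₀ᵗ f(r) |r - s|^p dr` with `c = H(2H-1)`,
`p = 2H-2`; by Fubini `A_t` is symmetric for the pairing `∫₀ᵗ u v`. The kernel equation says
`A_t g(·,t) = σ` on `[0,t]`, and differentiating it in `t` at `s < t` gives
`A_t ∂g(·,t) = -c g(t,t) |t - ·|^p`. Pairing the first identity with `∂g(·,t)` and the second with
`g(·,t)` yields `σ ∫₀ᵗ ∂g(s,t) ds = -c g(t,t) ∫₀ᵗ g(s,t) |t - s|^p ds = -g(t,t) (σ - σ² g(t,t))`,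
so the Leibniz rule `d/dt ∫₀ᵗ g(s,t) ds = g(t,t) + ∫₀ᵗ ∂g(s,t) ds` gives the claim for `t < T`;
the endpoint `t = T` follows by continuity.
-/

open MeasureTheory intervalIntegral Set Filter Topology

theorem integral_hasDerivAt_right_of_continuousAt_uncurry {F : ℝ → ℝ → ℝ} {t : ℝ}
    (hF : ContinuousAt (Function.uncurry F) (t, t))
    (hint : ∀ᶠ τ in 𝓝 t, IntervalIntegrable (F · τ) volume t τ) :
    HasDerivAt (fun τ => ∫ r in t..τ, F r τ) (F t t) t := by
  rw [hasDerivAt_iff_isLittleO, Asymptotics.isLittleO_iff]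
  intro ε hε
  obtain ⟨δ, hδ, hFδ⟩ := Metric.continuousAt_iff.1 hF ε hε
  filter_upwards [Metric.ball_mem_nhds t hδ, hint] with τ hτ hτint
  rw [integral_same, sub_zero, ← intervalIntegral.integral_const,
    ← integral_sub hτint intervalIntegrable_const, Real.norm_eq_abs (τ - t)]
  refine norm_integral_le_of_norm_le_const fun r hr => ?_
  have hrτ : dist (r, τ) (t, t) < δ := by
    rw [Prod.dist_eq, Real.dist_eq r, max_lt_iff]
    exact ⟨(abs_sub_left_of_mem_uIcc (uIoc_subset_uIcc hr)).trans_lt hτ, hτ⟩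
  exact (dist_eq_norm _ _).symm.trans_le (hFδ hrτ).le

theorem hasDerivAt_integral_mul_of_hasDerivAt {g d : ℝ → ℝ → ℝ} {k : ℝ → ℝ} {a b : ℝ} (t : ℝ)
    (hg : ∀ τ, Continuous (g · τ)) (hd : Continuous (Function.uncurry d))
    (hgd : ∀ r τ, HasDerivAt (g r) (d r τ) τ) (hk : IntervalIntegrable k volume a b) :
    HasDerivAt (fun τ => ∫ r in a..b, g r τ * k r) (∫ r in a..b, d r t * k r) t := by
  obtain ⟨C, hC⟩ := (isCompact_uIcc.prod (isCompact_closedBall t 1)).exists_bound_of_continuousOn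
    hd.continuousOn
  have hkm := hk.def'.aestronglyMeasurable
  refine (hasDerivAt_integral_of_dominated_loc_of_deriv_le (bound := fun r => C * ‖k r‖)
    (Metric.closedBall_mem_nhds t one_pos) (.of_forall fun τ => (hg τ).aestronglyMeasurable.mul hkm)
    (hk.continuousOn_mul (hg t).continuousOn)
    ((hd.comp (Continuous.prodMk_left t)).aestronglyMeasurable.mul hkm)
    ?_ (hk.norm.const_mul C) (.of_forall fun r _ τ _ => (hgd r τ).mul_const (k r))).2
  refine .of_forall fun r hr τ hτ => ?_
  rw [norm_mul]
  exact mul_le_mul_of_nonneg_right (hC (r, τ) ⟨uIoc_subset_uIcc hr, hτ⟩) (norm_nonneg _)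

theorem hasDerivAt_integral_upper_mul {g d : ℝ → ℝ → ℝ} {k : ℝ → ℝ} (a t : ℝ)
    (hg : Continuous (Function.uncurry g)) (hd : Continuous (Function.uncurry d))
    (hgd : ∀ r τ, HasDerivAt (g r) (d r τ) τ) (hk : ∀ a b, IntervalIntegrable k volume a b)
    (hkt : ContinuousAt k t) :
    HasDerivAt (fun τ => ∫ r in a..τ, g r τ * k r) (g t t * k t + ∫ r in a..t, d r t * k r) t := by
  have hgr : ∀ τ, Continuous (g · τ) := fun τ => hg.comp (Continuous.prodMk_left τ)
  have hint : ∀ b c τ, IntervalIntegrable (fun r => g r τ * k r) volume b c := fun b c τ =>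
    (hk b c).continuousOn_mul (hgr τ).continuousOn
  have hupper := integral_hasDerivAt_right_of_continuousAt_uncurry (F := fun r τ => g r τ * k r)
    (hg.continuousAt.mul (hkt.comp continuousAt_fst)) (.of_forall fun τ => hint t τ τ)
  refine (hupper.add (hasDerivAt_integral_mul_of_hasDerivAt t hgr hd hgd (hk a t)))
    |>.congr_of_eventuallyEq (.of_forall fun τ => ?_)
  exact (integral_add_adjacent_intervals (hint a t τ) (hint t τ τ)).symm.trans (add_comm _ _)

theorem intervalIntegrable_abs_rpow {p : ℝ} (hp : -1 < p) (a b : ℝ) :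
    IntervalIntegrable (fun x : ℝ => |x| ^ p) volume a b := by
  have hnonneg : ∀ c, 0 ≤ c → IntervalIntegrable (fun x : ℝ => |x| ^ p) volume 0 c :=
    fun c hc => (intervalIntegrable_rpow' hp).congr fun x hx => by
      rw [uIoc_of_le hc] at hx
      simp only [abs_of_pos hx.1]
  have hzero : ∀ c, IntervalIntegrable (fun x : ℝ => |x| ^ p) volume 0 c := fun c => by
    rcases le_total 0 c with hc | hc
    · exact hnonneg c hc
    · simpa using (IntervalIntegrable.iff_comp_neg).1 (hnonneg (-c) (neg_nonneg.2 hc))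
  exact (hzero a).symm.trans (hzero b)

theorem intervalIntegrable_abs_sub_rpow {p : ℝ} (hp : -1 < p) (s a b : ℝ) :
    IntervalIntegrable (fun r : ℝ => |r - s| ^ p) volume a b := by
  simpa using (intervalIntegrable_abs_rpow hp (a - s) (b - s)).comp_sub_right s

theorem continuous_integral_abs_sub_rpow {p : ℝ} (hp : -1 < p) (a b : ℝ) :
    Continuous fun s => ∫ r in a..b, |r - s| ^ p := by
  have hprim := continuous_primitive (intervalIntegrable_abs_rpow hp) 0
  have hshift : (fun s => ∫ r in a..b, |r - s| ^ p) =
      fun s => (∫ x in (0:ℝ)..b - s, |x| ^ p) - ∫ x in (0:ℝ)..a - s, |x| ^ p := by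
    funext s
    rw [integral_comp_sub_right (fun x => |x| ^ p),
      integral_interval_sub_left (intervalIntegrable_abs_rpow hp _ _)
        (intervalIntegrable_abs_rpow hp _ _)]
  rw [hshift]
  exact (hprim.comp (continuous_const.sub continuous_id)).sub
    (hprim.comp (continuous_const.sub continuous_id))

theorem integrable_abs_sub_rpow_prod {p : ℝ} (hp : -1 < p) {a b : ℝ} (hab : a ≤ b) :
    Integrable (fun z : ℝ × ℝ => |z.2 - z.1| ^ p)
      ((volume.restrict (Ioc a b)).prod (volume.restrict (Ioc a b))) := by
  refine (integrable_prod_iff (by fun_prop : Measurable _).aestronglyMeasurable).2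
    ⟨.of_forall fun s => ?_, ?_⟩
  · exact (intervalIntegrable_iff_integrableOn_Ioc_of_le hab).1
      (intervalIntegrable_abs_sub_rpow hp s a b)
  · refine (continuous_integral_abs_sub_rpow hp a b).integrableOn_Ioc.congr_fun
      (fun s _ => ?_) measurableSet_Ioc
    simp only [Real.norm_of_nonneg (Real.rpow_nonneg (abs_nonneg _) _), integral_of_le hab]

theorem integrable_mul_abs_sub_rpow_prod {p : ℝ} (hp : -1 < p) {a b : ℝ} (hab : a ≤ b)
    {f : ℝ × ℝ → ℝ} (hf : Continuous f) :
    Integrable (fun z : ℝ × ℝ => f z * |z.2 - z.1| ^ p)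
      ((volume.restrict (Ioc a b)).prod (volume.restrict (Ioc a b))) := by
  have h := integrable_abs_sub_rpow_prod hp hab
  rw [Measure.prod_restrict, ← Measure.volume_eq_prod] at h ⊢
  exact IntegrableOn.continuousOn_mul_of_subset hf.continuousOn h
    (isCompact_Icc.prod isCompact_Icc) (measurableSet_Ioc.prod measurableSet_Ioc)
    (prod_mono Ioc_subset_Icc_self Ioc_subset_Icc_self)

section AbsSubRpow

variable {p a b : ℝ} {f₁ f₂ : ℝ → ℝ}

theorem intervalIntegrable_mul_integral_abs_sub_rpow (hp : -1 < p) (hab : a ≤ b)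
    (h₁ : Continuous f₁) (h₂ : Continuous f₂) :
    IntervalIntegrable (fun s => f₁ s * ∫ r in a..b, f₂ r * |r - s| ^ p) volume a b := by
  rw [intervalIntegrable_iff_integrableOn_Ioc_of_le hab]
  refine (integrable_mul_abs_sub_rpow_prod hp hab (f := fun z => f₁ z.1 * f₂ z.2)
    (by fun_prop)).integral_prod_left.congr (.of_forall fun s => ?_)
  simp only [integral_of_le hab, ← MeasureTheory.integral_const_mul, mul_assoc]

theorem integral_mul_integral_abs_sub_rpow_comm (hp : -1 < p) (hab : a ≤ b)
    (h₁ : Continuous f₁) (h₂ : Continuous f₂) :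
    ∫ s in a..b, f₁ s * ∫ r in a..b, f₂ r * |r - s| ^ p =
      ∫ s in a..b, f₂ s * ∫ r in a..b, f₁ r * |r - s| ^ p := by
  have hswap := integral_integral_swap (f := fun s r => f₁ s * f₂ r * |r - s| ^ p)
    (integrable_mul_abs_sub_rpow_prod hp hab (f := fun z => f₁ z.1 * f₂ z.2) (by fun_prop))
  simp only [integral_of_le hab, ← MeasureTheory.integral_const_mul, ← mul_assoc]
  rw [hswap]
  congr with s
  congr with r
  rw [abs_sub_comm]
  ring

theorem integral_mul_abs_sub_rpow_operator_comm (hp : -1 < p) (hab : a ≤ b)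
    (h₁ : Continuous f₁) (h₂ : Continuous f₂) (α β : ℝ) :
    ∫ s in a..b, f₁ s * (α * f₂ s + β * ∫ r in a..b, f₂ r * |r - s| ^ p) =
      ∫ s in a..b, f₂ s * (α * f₁ s + β * ∫ r in a..b, f₁ r * |r - s| ^ p) := by
  have hsplit : ∀ {u v : ℝ → ℝ}, Continuous u → Continuous v →
      ∫ s in a..b, u s * (α * v s + β * ∫ r in a..b, v r * |r - s| ^ p) =
        α * (∫ s in a..b, u s * v s) + β * ∫ s in a..b, u s * ∫ r in a..b, v r * |r - s| ^ p := by
    intro u v hu hv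
    simp only [mul_add, mul_left_comm (u _)]
    rw [integral_add ((by fun_prop : Continuous fun s => α * (u s * v s)).intervalIntegrable a b)
      ((intervalIntegrable_mul_integral_abs_sub_rpow hp hab hu hv).const_mul β),
      intervalIntegral.integral_const_mul, intervalIntegral.integral_const_mul]
  rw [hsplit h₁ h₂, hsplit h₂ h₁, integral_mul_integral_abs_sub_rpow_comm hp hab h₁ h₂]
  simp only [mul_comm (f₁ _)]

end AbsSubRpow

theorem ContDiff.exists_hasDerivAt_snd {g : ℝ → ℝ → ℝ} (hg : ContDiff ℝ 1 (Function.uncurry g)) :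
    ∃ d : ℝ → ℝ → ℝ, Continuous (Function.uncurry d) ∧ ∀ r τ, HasDerivAt (g r) (d r τ) τ :=
  ⟨fun r τ => fderiv ℝ (Function.uncurry g) (r, τ) (0, 1),
    (hg.continuous_fderiv one_ne_zero).clm_apply continuous_const,
    fun r τ => ((hg.differentiable one_ne_zero) (r, τ)).hasFDerivAt.comp_hasDerivAt τ
      ((hasDerivAt_const τ r).prodMk (hasDerivAt_id τ))⟩

def KernelEquation (T σ c p : ℝ) (g : ℝ → ℝ → ℝ) : Prop :=
  ∀ s t : ℝ, 0 ≤ s → s ≤ t → t ≤ T → σ ^ 2 * g s t + c * ∫ r in (0 : ℝ)..t, g r t * |r - s| ^ p = σ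

section KernelEquation

variable {T σ c p : ℝ} {g d : ℝ → ℝ → ℝ}

theorem KernelEquation.deriv_snd (hker : KernelEquation T σ c p g) (hp : -1 < p)
    (hg : Continuous (Function.uncurry g)) (hd : Continuous (Function.uncurry d))
    (hgd : ∀ r τ, HasDerivAt (g r) (d r τ) τ) {s t : ℝ} (hs : 0 ≤ s) (hst : s < t) (htT : t < T) :
    σ ^ 2 * d s t + c * (g t t * |t - s| ^ p + ∫ r in (0 : ℝ)..t, d r t * |r - s| ^ p) = 0 := by
  have hkt : ContinuousAt (fun r => |r - s| ^ p) t :=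
    (continuous_id.sub continuous_const).abs.continuousAt.rpow_const
      (Or.inl (abs_pos.2 (sub_ne_zero.2 hst.ne')).ne')
  have hderiv := ((hgd s t).const_mul (σ ^ 2)).add ((hasDerivAt_integral_upper_mul 0 t
    hg hd hgd (intervalIntegrable_abs_sub_rpow hp s) hkt).const_mul c)
  refine hderiv.unique ((hasDerivAt_const t σ).congr_of_eventuallyEq ?_)
  filter_upwards [Ioo_mem_nhds hst htT] with τ hτ
  exact hker s τ hs hτ.1.le hτ.2.le

theorem KernelEquation.diag_add_integral_deriv_eq (hker : KernelEquation T σ c p g) (hσ : σ ≠ 0)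
    (hp : -1 < p) (hg : Continuous (Function.uncurry g)) (hd : Continuous (Function.uncurry d))
    (hgd : ∀ r τ, HasDerivAt (g r) (d r τ) τ) {t : ℝ} (ht : 0 ≤ t) (htT : t < T) :
    g t t + ∫ s in (0 : ℝ)..t, d s t = σ * g t t ^ 2 := by
  have hgt : Continuous (g · t) := hg.comp (Continuous.prodMk_left t)
  have hdt : Continuous (d · t) := hd.comp (Continuous.prodMk_left t)
  have key : σ * ∫ s in (0 : ℝ)..t, d s t = -(g t t * (σ - σ ^ 2 * g t t)) := calc
    σ * ∫ s in (0 : ℝ)..t, d s t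
        = ∫ s in (0 : ℝ)..t,
            d s t * (σ ^ 2 * g s t + c * ∫ r in (0 : ℝ)..t, g r t * |r - s| ^ p) := by
      rw [← intervalIntegral.integral_const_mul]
      refine integral_congr fun s hs => ?_
      rw [uIcc_of_le ht] at hs
      simp only [hker s t hs.1 hs.2 htT.le, mul_comm σ]
    _ = ∫ s in (0 : ℝ)..t, g s t * (σ ^ 2 * d s t + c * ∫ r in (0 : ℝ)..t, d r t * |r - s| ^ p) :=
      integral_mul_abs_sub_rpow_operator_comm hp ht hdt hgt _ _
    _ = ∫ s in (0 : ℝ)..t, -(g t t * (c * (g s t * |s - t| ^ p))) := by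
      refine integral_congr_uIoo fun s hs => ?_
      rw [uIoo_of_le ht] at hs
      rw [abs_sub_comm s t]
      linear_combination g s t * hker.deriv_snd hp hg hd hgd hs.1.le hs.2 htT
    _ = -(g t t * (σ - σ ^ 2 * g t t)) := by
      rw [intervalIntegral.integral_neg, intervalIntegral.integral_const_mul,
        intervalIntegral.integral_const_mul]
      linear_combination -g t t * hker t t ht le_rfl htT.le
  apply mul_left_cancel₀ hσ
  linear_combination key

theorem KernelEquation.diag_add_integral_deriv_eq_of_mem_Icc (hker : KernelEquation T σ c p g)
    (hT : 0 < T) (hσ : σ ≠ 0) (hp : -1 < p) (hg : Continuous (Function.uncurry g))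
    (hd : Continuous (Function.uncurry d)) (hgd : ∀ r τ, HasDerivAt (g r) (d r τ) τ) {t : ℝ}
    (ht : t ∈ Icc 0 T) :
    g t t + ∫ s in (0 : ℝ)..t, d s t = σ * g t t ^ 2 := by
  have hdiag : Continuous fun t => g t t := hg.comp (continuous_id.prodMk continuous_id)
  have hcont : Continuous fun t => g t t + ∫ s in (0 : ℝ)..t, d s t :=
    hdiag.add (continuous_parametric_intervalIntegral_of_continuous (f := fun τ s => d s τ)
      (hd.comp continuous_swap) continuous_id)
  have hsub : Icc 0 T ⊆ {t | g t t + ∫ s in (0 : ℝ)..t, d s t = σ * g t t ^ 2} := by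
    rw [← closure_Ico hT.ne]
    exact (isClosed_eq hcont (continuous_const.mul (hdiag.pow 2))).closure_subset_iff.2
      fun t ht => hker.diag_add_integral_deriv_eq hσ hp hg hd hgd ht.1 ht.2
  exact hsub ht

end KernelEquation

theorem stmt_7_general (T σ H : ℝ) (hT : 0 < T) (hσ : 0 < σ) (hH1 : 1/2 < H)
    (g : ℝ → ℝ → ℝ) (hg : ContDiff ℝ 1 (Function.uncurry g))
    (hker : ∀ s t : ℝ, 0 ≤ s → s ≤ t → t ≤ T →
      σ ^ 2 * g s t + H * (2 * H - 1) * ∫ r in (0 : ℝ)..t, g r t * |r - s| ^ (2 * H - 2) = σ) :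
    ∀ t ∈ Set.Icc (0 : ℝ) T,
      HasDerivAt (fun τ => ∫ s in (0 : ℝ)..τ, g s τ) (σ * (g t t) ^ 2) t := by
  intro t ht
  obtain ⟨d, hd, hgd⟩ := hg.exists_hasDerivAt_snd
  have hleibniz := hasDerivAt_integral_upper_mul (k := fun _ => 1) 0 t hg.continuous hd
    hgd (fun _ _ => intervalIntegrable_const) continuousAt_const
  simp only [mul_one] at hleibniz
  have hp : -1 < 2 * H - 2 := by linarith
  rwa [KernelEquation.diag_add_integral_deriv_eq_of_mem_Icc hker hT hσ.ne' hp hg.continuous hd hgd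
    ht] at hleibniz

theorem stmt_7 (T σ H : ℝ) (hT : 0 < T) (hσ : 0 < σ) (hH1 : 1/2 < H) (hH2 : H < 1)
    (g : ℝ → ℝ → ℝ) (hg : ContDiff ℝ 1 (Function.uncurry g))
    (hker : ∀ s t : ℝ, 0 ≤ s → s ≤ t → t ≤ T →
      σ ^ 2 * g s t + H * (2 * H - 1) * ∫ r in (0 : ℝ)..t, g r t * |r - s| ^ (2 * H - 2) = σ) :
    ∀ t ∈ Set.Icc (0 : ℝ) T,
      HasDerivAt (fun τ => ∫ s in (0 : ℝ)..τ, g s τ) (σ * (g t t) ^ 2) t :=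
  stmt_7_general T σ H hT hσ hH1 g hg hker
end

section
/- For H' ∈ (0,1), a > 0, n ∈ ℕ with n ≥ 1, and v > 0, define L_n(u,H',a) = ∫₀^∞ exp(−(1/2)(u t^{−H'/(n−H')} − a t^{(1−H')/(n−H')})²) dt. Then as u → ∞, L_n(u,H',a) ~ √(2π)(n−H') a^{−n} u^{n−1}, i.e., L_n(u,H',a)/(√(2π)(n−H')a^{−n}u^{n−1}) → 1. -/
/-!
Substituting `t = (m (1 + ε x)) ^ β` with `β = n - H'`, `m = u / a` and
`ε = a ^ (-H') u ^ (H' - 1)` turns `L u` into `β a ^ (-n) u ^ (n - 1)` times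
`∫_{x > -1/ε} (1 + ε x) ^ (β - 1) exp (-((1 + ε x) ^ (-H') x) ^ 2 / 2) dx`.
As `u → ∞` we have `ε → 0`, and the integrand tends to `exp (-x ^ 2 / 2)`. Dominated
convergence gives the limit `√(2π)`: for `ε ≤ 1` the integrand is at most
`2 exp (-x ^ 2 / 4)` when `x ≤ 0`, and at most a power of `x` times the stretched
exponential `exp (-x ^ (2 - 2H') / 8)` when `x > 0`.
-/

open MeasureTheory Filter

open Real Set Topology

lemma mul_exp_neg_sq_le (y : ℝ) : y * exp (-(1 / 16) * y ^ 2) ≤ 2 := by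
  have h : y ≤ 2 * exp ((1 / 16) * y ^ 2) := by
    nlinarith [add_one_le_exp ((1 / 16) * y ^ 2), sq_nonneg (y - 4)]
  rw [neg_mul, exp_neg, ← div_eq_mul_inv, div_le_iff₀ (exp_pos _)]
  exact h

lemma one_add_rpow_le {x r : ℝ} (hx : 0 ≤ x) (hr : 0 ≤ r) :
    (1 + x) ^ r ≤ 2 ^ r * (1 + x ^ r) := by
  have hxr : 0 ≤ x ^ r := rpow_nonneg hx r
  rcases le_total x 1 with hx1 | hx1
  · calc (1 + x) ^ r ≤ 2 ^ r := rpow_le_rpow (by linarith) (by linarith) hr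
      _ ≤ 2 ^ r * (1 + x ^ r) := le_mul_of_one_le_right (by positivity) (by linarith)
  · calc (1 + x) ^ r ≤ (2 * x) ^ r := rpow_le_rpow (by linarith) (by linarith) hr
      _ = 2 ^ r * x ^ r := mul_rpow zero_le_two hx
      _ ≤ 2 ^ r * (1 + x ^ r) := by gcongr; linarith

lemma rpow_two_sub_two_mul_le {x H : ℝ} (hx : 0 ≤ x) (hH0 : 0 ≤ H) (hH1 : H ≤ 1) :
    x ^ (2 - 2 * H) ≤ 4 * ((1 + x) ^ (-H) * x) ^ 2 + 1 := by
  rcases le_total x 1 with hx1 | hx1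
  · have := rpow_le_one hx hx1 (by linarith : 0 ≤ 2 - 2 * H)
    nlinarith [sq_nonneg ((1 + x) ^ (-H) * x)]
  · have hx0 : 0 < x := by linarith
    have hcmp : x ^ (-H) * x ≤ 2 * ((1 + x) ^ (-H) * x) := by
      have h2 : (2 : ℝ) ^ (-1 : ℝ) ≤ 2 ^ (-H) :=
        rpow_le_rpow_of_exponent_le one_le_two (by linarith)
      have h2x : (2 * x) ^ (-H) ≤ (1 + x) ^ (-H) :=
        rpow_le_rpow_of_nonpos (by linarith) (by linarith) (by linarith)
      rw [mul_rpow zero_le_two hx, rpow_neg_one] at *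
      have : x ^ (-H) ≤ 2 * (1 + x) ^ (-H) := by nlinarith [rpow_nonneg hx (-H)]
      nlinarith
    have hsplit : x ^ (2 - 2 * H) = (x ^ (-H) * x) ^ 2 := by
      rw [mul_pow, ← rpow_natCast, ← rpow_mul hx0.le, ← rpow_natCast x 2, ← rpow_add hx0]
      norm_num; ring_nf
    rw [hsplit]
    nlinarith [pow_le_pow_left₀ (by positivity) hcmp 2]

noncomputable def perturbedGaussian (H γ ε x : ℝ) : ℝ :=
  (1 + ε * x) ^ γ * exp (-(1 / 2) * ((1 + ε * x) ^ (-H) * x) ^ 2)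

section Bounds

variable {H γ ε x : ℝ}

lemma perturbedGaussian_le_of_nonpos (hH0 : 0 ≤ H) (hH1 : H ≤ 1) (hγ : -H ≤ γ)
    (hε0 : 0 ≤ ε) (hε1 : ε ≤ 1) (hx : x ≤ 0) (hw : 0 < 1 + ε * x) :
    perturbedGaussian H γ ε x ≤ 2 * exp (-(1 / 4) * x ^ 2) := by
  set w := 1 + ε * x
  set y := w ^ (-H)
  have hw1 : w ≤ 1 := by nlinarith
  have hy1 : 1 ≤ y := one_le_rpow_of_pos_of_le_one_of_nonpos hw hw1 (by linarith)
  have hwγ : w ^ γ ≤ y := rpow_le_rpow_of_exponent_ge hw hw1 hγ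
  have hsplit : exp (-(1 / 2) * (y * x) ^ 2)
      = exp (-(1 / 4) * (y * x) ^ 2) * exp (-(1 / 4) * (y * x) ^ 2) := by
    rw [← exp_add]; ring_nf
  have hgauss : exp (-(1 / 4) * (y * x) ^ 2) ≤ exp (-(1 / 4) * x ^ 2) := by
    have : x ^ 2 ≤ (y * x) ^ 2 := by
      rw [mul_pow]; exact le_mul_of_one_le_left (sq_nonneg x) (one_le_pow₀ hy1)
    exact exp_le_exp.mpr (by linarith)
  -- The factor `y` is harmless: either `|x| ≥ 1/2` and the Gaussian absorbs it, or `w > 1/2`.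
  have hbounded : y * exp (-(1 / 4) * (y * x) ^ 2) ≤ 2 := by
    rcases le_total (1 / 4) (x ^ 2) with hx2 | hx2
    · calc y * exp (-(1 / 4) * (y * x) ^ 2) ≤ y * exp (-(1 / 16) * y ^ 2) := by
            refine mul_le_mul_of_nonneg_left (exp_le_exp.mpr ?_) (by linarith)
            nlinarith [mul_le_mul_of_nonneg_left hx2 (sq_nonneg y)]
        _ ≤ 2 := mul_exp_neg_sq_le y
    · have hw2 : 1 / 2 ≤ w := by nlinarith
      have hy2 : y ≤ w⁻¹ := by
        rw [← rpow_neg_one]; exact rpow_le_rpow_of_exponent_ge hw hw1 (by linarith)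
      have : w⁻¹ ≤ 2 := by rw [inv_le_comm₀ hw two_pos]; linarith
      have : exp (-(1 / 4) * (y * x) ^ 2) ≤ 1 :=
        exp_le_one_iff.mpr (by nlinarith [sq_nonneg (y * x)])
      nlinarith [exp_pos (-(1 / 4) * (y * x) ^ 2)]
  calc perturbedGaussian H γ ε x = w ^ γ * exp (-(1 / 2) * (y * x) ^ 2) := rfl
    _ ≤ y * exp (-(1 / 2) * (y * x) ^ 2) := by gcongr
    _ = y * exp (-(1 / 4) * (y * x) ^ 2) * exp (-(1 / 4) * (y * x) ^ 2) := by
      rw [hsplit, mul_assoc]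
    _ ≤ 2 * exp (-(1 / 4) * x ^ 2) := by gcongr

lemma perturbedGaussian_le_of_nonneg {r : ℝ} (hH0 : 0 ≤ H) (hH1 : H ≤ 1) (hγr : γ ≤ r)
    (hr : 0 ≤ r) (hε0 : 0 ≤ ε) (hε1 : ε ≤ 1) (hx : 0 ≤ x) :
    perturbedGaussian H γ ε x
      ≤ exp (1 / 8) * 2 ^ r * ((1 + x ^ r) * exp (-(1 / 8) * x ^ (2 - 2 * H))) := by
  set w := 1 + ε * x
  have hw1 : 1 ≤ w := by nlinarith
  have hwx : w ≤ 1 + x := by nlinarith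
  have hpow : w ^ γ ≤ 2 ^ r * (1 + x ^ r) :=
    calc w ^ γ ≤ w ^ r := rpow_le_rpow_of_exponent_le hw1 hγr
      _ ≤ (1 + x) ^ r := rpow_le_rpow (by linarith) hwx hr
      _ ≤ 2 ^ r * (1 + x ^ r) := one_add_rpow_le hx hr
  have hexp : exp (-(1 / 2) * (w ^ (-H) * x) ^ 2)
      ≤ exp (1 / 8) * exp (-(1 / 8) * x ^ (2 - 2 * H)) := by
    have hmono : (1 + x) ^ (-H) * x ≤ w ^ (-H) * x := by
      refine mul_le_mul_of_nonneg_right ?_ hx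
      exact rpow_le_rpow_of_nonpos (by linarith) hwx (by linarith)
    have := rpow_two_sub_two_mul_le hx hH0 hH1
    rw [← exp_add]
    exact exp_le_exp.mpr (by nlinarith [pow_le_pow_left₀ (by positivity) hmono 2])
  calc perturbedGaussian H γ ε x = w ^ γ * exp (-(1 / 2) * (w ^ (-H) * x) ^ 2) := rfl
    _ ≤ 2 ^ r * (1 + x ^ r) * (exp (1 / 8) * exp (-(1 / 8) * x ^ (2 - 2 * H))) := by
      gcongr
    _ = _ := by ring

end Bounds

noncomputable def perturbedGaussianMajorant (H r x : ℝ) : ℝ :=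
  2 * exp (-(1 / 4) * x ^ 2) + (Ioi 0).indicator
    (fun x ↦ exp (1 / 8) * 2 ^ r * ((1 + x ^ r) * exp (-(1 / 8) * x ^ (2 - 2 * H)))) x

lemma integrableOn_one_add_rpow_mul_exp_neg_mul_rpow {r p b : ℝ} (hr : 0 ≤ r) (hp : 0 < p)
    (hb : 0 < b) : IntegrableOn (fun x : ℝ ↦ (1 + x ^ r) * exp (-b * x ^ p)) (Ioi 0) := by
  have h := (integrableOn_rpow_mul_exp_neg_mul_rpow (s := 0) (by norm_num) hp hb).add
    (integrableOn_rpow_mul_exp_neg_mul_rpow (s := r) (by linarith) hp hb)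
  simpa only [Pi.add_def, rpow_zero, add_mul] using h

lemma integrable_perturbedGaussianMajorant {H r : ℝ} (hH : H < 1) (hr : 0 ≤ r) :
    Integrable (perturbedGaussianMajorant H r) :=
  ((integrable_exp_neg_mul_sq (by norm_num : (0 : ℝ) < 1 / 4)).const_mul 2).add
    (IntegrableOn.integrable_indicator (Integrable.const_mul
      (integrableOn_one_add_rpow_mul_exp_neg_mul_rpow (p := 2 - 2 * H) (b := 1 / 8) hr
        (by linarith) (by norm_num)) _) measurableSet_Ioi)

lemma one_add_mul_pos {ε x : ℝ} (hε : 0 < ε) (hx : -ε⁻¹ < x) : 0 < 1 + ε * x := by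
  have := mul_lt_mul_of_pos_left hx hε
  rw [mul_neg, mul_inv_cancel₀ hε.ne'] at this
  linarith

lemma norm_indicator_perturbedGaussian_le {H γ r ε : ℝ} (hH0 : 0 ≤ H) (hH1 : H ≤ 1)
    (hγ : -H ≤ γ) (hγr : γ ≤ r) (hr : 0 ≤ r) (hε0 : 0 < ε) (hε1 : ε ≤ 1) (x : ℝ) :
    ‖(Ioi (-ε⁻¹)).indicator (perturbedGaussian H γ ε) x‖
      ≤ perturbedGaussianMajorant H r x := by
  have hpos : 0 ≤ (Ioi 0).indicator
      (fun x ↦ exp (1 / 8) * 2 ^ r * ((1 + x ^ r) * exp (-(1 / 8) * x ^ (2 - 2 * H)))) x := by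
    refine indicator_nonneg (fun y hy ↦ ?_) x
    have := rpow_nonneg (le_of_lt (mem_Ioi.mp hy)) r
    positivity
  by_cases hx : x ∈ Ioi (-ε⁻¹)
  · have hw := one_add_mul_pos hε0 hx
    rw [indicator_of_mem hx, norm_of_nonneg (by unfold perturbedGaussian; positivity),
      perturbedGaussianMajorant]
    rcases le_or_gt x 0 with hx0 | hx0
    · linarith [perturbedGaussian_le_of_nonpos hH0 hH1 hγ hε0.le hε1 hx0 hw]
    · rw [indicator_of_mem (mem_Ioi.mpr hx0)]
      linarith [exp_pos (-(1 / 4) * x ^ 2),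
        perturbedGaussian_le_of_nonneg hH0 hH1 hγr hr hε0.le hε1 hx0.le]
  · rw [indicator_of_notMem hx, norm_zero, perturbedGaussianMajorant]
    positivity

lemma tendsto_perturbedGaussian (H γ x : ℝ) :
    Tendsto (fun ε ↦ perturbedGaussian H γ ε x) (𝓝 0) (𝓝 (exp (-(1 / 2) * x ^ 2))) := by
  have hcont : ContinuousAt (fun ε ↦ perturbedGaussian H γ ε x) 0 := by
    unfold perturbedGaussian
    fun_prop (disch := simp)
  simpa [perturbedGaussian] using hcont.tendsto

theorem tendsto_integral_perturbedGaussian {H γ : ℝ} (hH0 : 0 ≤ H) (hH1 : H < 1)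
    (hγ : -H ≤ γ) :
    Tendsto (fun ε ↦ ∫ x in Ioi (-ε⁻¹), perturbedGaussian H γ ε x) (𝓝[>] 0)
      (𝓝 (√(2 * π))) := by
  have hgauss : ∫ x : ℝ, exp (-(1 / 2) * x ^ 2) = √(2 * π) := by
    rw [integral_gaussian]; norm_num [mul_comm]
  simp_rw [← integral_indicator measurableSet_Ioi, ← hgauss]
  refine tendsto_integral_filter_of_dominated_convergence
    (perturbedGaussianMajorant H (max γ 0)) ?_ ?_
    (integrable_perturbedGaussianMajorant hH1 (le_max_right γ 0)) ?_
  · refine Eventually.of_forall fun ε ↦ ?_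
    have : Measurable (perturbedGaussian H γ ε) := by unfold perturbedGaussian; fun_prop
    exact (this.indicator measurableSet_Ioi).aestronglyMeasurable
  · filter_upwards [Ioc_mem_nhdsGT zero_lt_one] with ε hε
    exact Eventually.of_forall (norm_indicator_perturbedGaussian_le hH0 hH1.le hγ
      (le_max_left γ 0) (le_max_right γ 0) hε.1 hε.2)
  · refine Eventually.of_forall fun x ↦ ?_
    have hmem : ∀ᶠ ε in 𝓝[>] (0 : ℝ), x ∈ Ioi (-ε⁻¹) :=
      (tendsto_inv_nhdsGT_zero.eventually_gt_atTop (-x)).mono fun ε hε ↦ by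
        rw [mem_Ioi]; linarith
    exact ((tendsto_perturbedGaussian H γ x).mono_left nhdsWithin_le_nhds).congr'
      (hmem.mono fun ε hε ↦ (indicator_of_mem hε _).symm)

lemma integral_Ioi_comp_one_add_mul (g : ℝ → ℝ) {ε : ℝ} (hε : 0 < ε) :
    ε * ∫ x in Ioi (-ε⁻¹), g (1 + ε * x) = ∫ w in Ioi 0, g w := by
  have himg : (fun x ↦ 1 + ε * x) '' Ioi (-ε⁻¹) = Ioi 0 := by
    rw [show (fun x ↦ 1 + ε * x) = (1 + ·) ∘ (ε * ·) from rfl, image_comp,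
      image_mul_left_Ioi hε, image_const_add_Ioi, mul_neg, mul_inv_cancel₀ hε.ne',
      add_neg_cancel]
  have hderiv (x : ℝ) : HasDerivAt (fun x ↦ 1 + ε * x) ε x := by
    simpa using ((hasDerivAt_id x).const_mul ε).const_add 1
  rw [← himg, integral_image_eq_integral_abs_deriv_smul measurableSet_Ioi
    (fun x _ ↦ (hderiv x).hasDerivWithinAt)
    ((add_right_injective 1).comp (mul_right_injective₀ hε.ne')).injOn g]
  simp [abs_of_pos hε, integral_const_mul]

lemma integral_Ioi_eq_integral_comp_rpow_affine (f : ℝ → ℝ) {β m ε : ℝ} (hβ : 0 < β)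
    (hm : 0 < m) (hε : 0 < ε) :
    ∫ t in Ioi 0, f t = β * m ^ β * ε *
      ∫ x in Ioi (-ε⁻¹), (1 + ε * x) ^ (β - 1) * f ((m * (1 + ε * x)) ^ β) := by
  rw [← integral_comp_rpow_Ioi_of_pos hβ, ← mul_zero m,
    ← integral_comp_mul_left_Ioi' _ _ hm, ← integral_Ioi_comp_one_add_mul _ hε, smul_eq_mul]
  simp only [← integral_const_mul]
  refine setIntegral_congr_fun measurableSet_Ioi fun x hx ↦ ?_
  have hw := one_add_mul_pos hε hx
  rw [smul_eq_mul, mul_rpow hm.le hw.le, rpow_sub_one hm.ne']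
  field_simp

lemma exp_neg_sq_comp_rpow_affine {H β a u m ε x : ℝ} (hβ : β ≠ 0) (hm : 0 < m)
    (hmu : a * m = u) (hεu : u * ε = m ^ H) (hw : 0 < 1 + ε * x) :
    (1 + ε * x) ^ (β - 1) * exp (-(1 / 2) * (u * ((m * (1 + ε * x)) ^ β) ^ (-H / β)
      - a * ((m * (1 + ε * x)) ^ β) ^ ((1 - H) / β)) ^ 2)
      = perturbedGaussian H (β - 1) ε x := by
  have hmw : 0 < m * (1 + ε * x) := mul_pos hm hw
  have huε : u * ε ≠ 0 := hεu ▸ (rpow_pos_of_pos hm H).ne'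
  have ha : a ≠ 0 := left_ne_zero_of_mul (hmu ▸ left_ne_zero_of_mul huε)
  have hε : ε ≠ 0 := right_ne_zero_of_mul huε
  have hlin : u * ((m * (1 + ε * x)) ^ β) ^ (-H / β)
      - a * ((m * (1 + ε * x)) ^ β) ^ ((1 - H) / β) = -((1 + ε * x) ^ (-H) * x) := by
    rw [← rpow_mul hmw.le, ← rpow_mul hmw.le, mul_div_cancel₀ _ hβ, mul_div_cancel₀ _ hβ,
      show 1 - H = -H + 1 by ring, rpow_add hmw, rpow_one, mul_rpow hm.le hw.le, rpow_neg hm.le,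
      ← hεu, ← hmu]
    field_simp
    ring
  rw [perturbedGaussian, hlin, neg_sq]

lemma integral_exp_neg_sq_eq_mul_integral_perturbedGaussian {H β a u m ε : ℝ} (hβ : 0 < β)
    (hm : 0 < m) (hε : 0 < ε) (hmu : a * m = u) (hεu : u * ε = m ^ H) :
    ∫ t in Ioi 0, exp (-(1 / 2) * (u * t ^ (-H / β) - a * t ^ ((1 - H) / β)) ^ 2)
      = β * m ^ β * ε * ∫ x in Ioi (-ε⁻¹), perturbedGaussian H (β - 1) ε x := by
  rw [integral_Ioi_eq_integral_comp_rpow_affine _ hβ hm hε]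
  congr 1
  exact setIntegral_congr_fun measurableSet_Ioi fun x hx ↦
    exp_neg_sq_comp_rpow_affine hβ.ne' hm hmu hεu (one_add_mul_pos hε hx)

theorem stmt_13 (H' a : ℝ) (hH'0 : 0 < H') (hH'1 : H' < 1) (ha : 0 < a)
    (n : ℕ) (hn : 1 ≤ n)
    (L : ℝ → ℝ)
    (hL : ∀ u : ℝ, L u = ∫ t in Set.Ioi (0 : ℝ),
      Real.exp (-(1 / 2) * (u * t ^ (-H' / ((n : ℝ) - H'))
        - a * t ^ ((1 - H') / ((n : ℝ) - H'))) ^ 2)) :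
    Tendsto (fun u : ℝ =>
        L u / (Real.sqrt (2 * Real.pi) * ((n : ℝ) - H') * a ^ (-(n : ℝ)) * u ^ ((n : ℝ) - 1)))
      atTop (nhds 1) := by
  have hn' : (1 : ℝ) ≤ n := by exact_mod_cast hn
  have hβ : 0 < (n : ℝ) - H' := by linarith
  -- `ε u = a ^ (-H') u ^ (H' - 1)` is the relative width of the peak of the integrand of `L u`
  -- at `t = (u / a) ^ (n - H')`.
  set ε : ℝ → ℝ := fun u ↦ (u / a) ^ (H' - 1) / a
  have hε : Tendsto ε atTop (𝓝[>] 0) := by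
    refine tendsto_nhdsWithin_iff.mpr ⟨?_, ?_⟩
    · have := ((tendsto_rpow_neg_atTop (sub_pos.mpr hH'1)).comp
        (tendsto_id.atTop_div_const ha)).div_const a
      simpa only [Function.comp_def, id, neg_sub, zero_div] using this
    · filter_upwards [eventually_gt_atTop 0] with u hu
      exact div_pos (rpow_pos_of_pos (div_pos hu ha) _) ha
  have hLε : ∀ u > 0, L u = ((n : ℝ) - H') * a ^ (-(n : ℝ)) * u ^ ((n : ℝ) - 1) *
      ∫ x in Ioi (-(ε u)⁻¹), perturbedGaussian H' ((n : ℝ) - H' - 1) (ε u) x := by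
    intro u hu
    have hm : 0 < u / a := div_pos hu ha
    rw [hL, integral_exp_neg_sq_eq_mul_integral_perturbedGaussian hβ hm
      (div_pos (rpow_pos_of_pos hm _) ha) (mul_div_cancel₀ u ha.ne') ?_]
    · congr 1
      rw [mul_div_assoc', mul_assoc ((n : ℝ) - H'), ← rpow_add hm,
        show (n : ℝ) - H' + (H' - 1) = n - 1 by ring, div_rpow hu.le ha.le, rpow_sub_one ha.ne',
        rpow_neg ha.le]
      field_simp
    · rw [rpow_sub_one hm.ne']
      field_simp
  have hJ := (tendsto_integral_perturbedGaussian (γ := (n : ℝ) - H' - 1) hH'0.le hH'1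
    (by linarith)).comp hε
  have hsqrt : √(2 * π) ≠ 0 := by positivity
  refine ((hJ.div_const √(2 * π)).congr' ?_).trans (by rw [div_self hsqrt])
  filter_upwards [eventually_gt_atTop 0] with u hu
  rw [Function.comp_apply, hLε u hu]
  field_simp
end

section
/- With the setup of the previous statement and Γ the covariance matrix Γ_{ij} = σ²h(i∧j) + (1/2)h^{2H}(i^{2H}+j^{2H}−|i−j|^{2H}) with H ∈ (1/2,1), σ,h > 0, and t = (h, 2h, …, nh), one has E[(ϑ̂_n − ϑ)²] ≤ C h^{−2} n^{2H−2} for some constant C > 0, so ϑ̂_n converges to ϑ in mean square as n → ∞. -/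
/-!
`Γ` is positive definite: it is a positive multiple of the Brownian covariance `min (s, t)`,
which factors as `L Lᵀ` with `L` unitriangular, plus a multiple of the fBm kernel
`|s|^α + |t|^α - |s - t|^α`, which is positive semidefinite because
`|r|^α ∫₀^∞ (1 - cos u) u^{-1-α} du = ∫₀^∞ (1 - cos (r u)) u^{-1-α} du` and
`(1 - cos a) + (1 - cos b) - (1 - cos (a - b)) = (1 - cos a)(1 - cos b) + sin a sin b`.

The estimation error is `-(Γ⁻¹ t) ⬝ G / (t ⬝ Γ⁻¹ t)`, whose second moment is `1 / (t ⬝ Γ⁻¹ t)`.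
Cauchy–Schwarz for the inner product defined by `Γ` gives `(t ⬝ t)² ≤ (t ⬝ Γ t)(t ⬝ Γ⁻¹ t)`, and
`Γ i j ≤ (σ²h + h^{2H}) n^{2H}`, `∑ t ≤ h n²`, `t ⬝ t ≥ h² n³ / 3` give the rate `h⁻² n^{2H-2}`.
-/

open MeasureTheory Matrix Filter Set Real

section QuadraticForm

variable {ι : Type*} [Fintype ι]

lemma dotProduct_mulVec_eq_sum (M : Matrix ι ι ℝ) (x y : ι → ℝ) :
    x ⬝ᵥ M *ᵥ y = ∑ i, ∑ j, x i * M i j * y j := by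
  classical
  rw [← toBilin'_apply', toBilin'_apply]

lemma dotProduct_mulVec_comm {M : Matrix ι ι ℝ} (hM : M.IsHermitian) (x y : ι → ℝ) :
    x ⬝ᵥ M *ᵥ y = y ⬝ᵥ M *ᵥ x := by
  rw [dotProduct_mulVec, ← mulVec_transpose, (isHermitian_iff_isSymm.mp hM).eq, dotProduct_comm]

lemma Matrix.PosDef.mulVec_inv_mulVec [DecidableEq ι] {M : Matrix ι ι ℝ} (hM : M.PosDef)
    (v : ι → ℝ) : M *ᵥ M⁻¹ *ᵥ v = v := by
  rw [mulVec_mulVec, mul_nonsing_inv _ ((isUnit_iff_isUnit_det M).mp hM.isUnit), one_mulVec]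

lemma Matrix.PosSemidef.sq_dotProduct_mulVec_le {M : Matrix ι ι ℝ} (hM : M.PosSemidef)
    (a b : ι → ℝ) : (a ⬝ᵥ M *ᵥ b) ^ 2 ≤ (a ⬝ᵥ M *ᵥ a) * (b ⬝ᵥ M *ᵥ b) := by
  have hquad : ∀ s : ℝ, 0 ≤ (a ⬝ᵥ M *ᵥ a) * (s * s) + 2 * (a ⬝ᵥ M *ᵥ b) * s + b ⬝ᵥ M *ᵥ b :=
    fun s => by
      have := hM.dotProduct_mulVec_nonneg (s • a + b)
      simp only [star_trivial, mulVec_add, mulVec_smul, dotProduct_add, add_dotProduct,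
        dotProduct_smul, smul_dotProduct, smul_eq_mul, dotProduct_mulVec_comm hM.isHermitian b a]
        at this
      linarith
  have := discrim_le_zero hquad
  rw [discrim] at this
  linarith

lemma Matrix.PosDef.inv_dotProduct_inv_mulVec_le [DecidableEq ι] {M : Matrix ι ι ℝ}
    (hM : M.PosDef) {t : ι → ℝ} (ht : t ≠ 0) :
    (t ⬝ᵥ M⁻¹ *ᵥ t)⁻¹ ≤ (t ⬝ᵥ M *ᵥ t) / (t ⬝ᵥ t) ^ 2 := by
  have hCS : (t ⬝ᵥ t) ^ 2 ≤ (t ⬝ᵥ M *ᵥ t) * (t ⬝ᵥ M⁻¹ *ᵥ t) := by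
    simpa [hM.mulVec_inv_mulVec, dotProduct_comm t]
      using hM.posSemidef.sq_dotProduct_mulVec_le t (M⁻¹ *ᵥ t)
  have hD : 0 < t ⬝ᵥ M⁻¹ *ᵥ t := by simpa using hM.inv.dotProduct_mulVec_pos ht
  have hN : 0 < t ⬝ᵥ t := by simpa using dotProduct_self_star_pos_iff.mpr ht
  rw [inv_eq_one_div, div_le_div_iff₀ hD (by positivity)]
  linarith

lemma dotProduct_mulVec_le_of_apply_le {M : Matrix ι ι ℝ} {t : ι → ℝ} (ht : 0 ≤ t) {c : ℝ}
    (hM : ∀ i j, M i j ≤ c) : t ⬝ᵥ M *ᵥ t ≤ c * (∑ i, t i) ^ 2 := by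
  rw [dotProduct_mulVec_eq_sum, sq, Finset.sum_mul_sum, Finset.mul_sum]
  refine Finset.sum_le_sum fun i _ => ?_
  rw [Finset.mul_sum]
  refine Finset.sum_le_sum fun j _ => ?_
  have := mul_le_mul_of_nonneg_right (mul_le_mul_of_nonneg_left (hM i j) (ht i)) (ht j)
  linarith

variable {Ω : Type*} [MeasurableSpace Ω] {μ : Measure Ω} {G : Ω → ι → ℝ} {Γ : Matrix ι ι ℝ}

lemma integral_sq_dotProduct (hint : ∀ i j, Integrable (fun ω => G ω i * G ω j) μ)
    (hcov : ∀ i j, ∫ ω, G ω i * G ω j ∂μ = Γ i j) (z : ι → ℝ) :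
    ∫ ω, (z ⬝ᵥ G ω) ^ 2 ∂μ = z ⬝ᵥ Γ *ᵥ z := by
  have hsq : ∀ ω, (z ⬝ᵥ G ω) ^ 2 = ∑ i, ∑ j, z i * (G ω i * G ω j) * z j := fun ω => by
    rw [sq, dotProduct, Finset.sum_mul_sum]
    exact Finset.sum_congr rfl fun i _ => Finset.sum_congr rfl fun j _ => by ring
  have hint' : ∀ i j, Integrable (fun ω => z i * (G ω i * G ω j) * z j) μ :=
    fun i j => ((hint i j).const_mul _).mul_const _
  simp_rw [hsq, dotProduct_mulVec_eq_sum]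
  rw [integral_finsetSum _ fun i _ => integrable_finsetSum _ fun j _ => hint' i j]
  refine Finset.sum_congr rfl fun i _ => ?_
  rw [integral_finsetSum _ fun j _ => hint' i j]
  refine Finset.sum_congr rfl fun j _ => ?_
  rw [integral_mul_const, integral_const_mul, hcov]

/-- `(t ⬝ᵥ Γ⁻¹ *ᵥ Y) / (t ⬝ᵥ Γ⁻¹ *ᵥ t)` is the generalized least squares estimator of `ϑ` from
the observation `Y = ϑ t - G`. -/
lemma integral_sq_gls_sub_eq_inv [DecidableEq ι] (hΓ : Γ.PosDef) {t : ι → ℝ} (ht : t ≠ 0)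
    (hint : ∀ i j, Integrable (fun ω => G ω i * G ω j) μ)
    (hcov : ∀ i j, ∫ ω, G ω i * G ω j ∂μ = Γ i j) (ϑ : ℝ) :
    ∫ ω, ((t ⬝ᵥ Γ⁻¹ *ᵥ (ϑ • t - G ω)) / (t ⬝ᵥ Γ⁻¹ *ᵥ t) - ϑ) ^ 2 ∂μ
      = (t ⬝ᵥ Γ⁻¹ *ᵥ t)⁻¹ := by
  set D := t ⬝ᵥ Γ⁻¹ *ᵥ t
  set y := Γ⁻¹ *ᵥ t
  have hD : 0 < D := by simpa using hΓ.inv.dotProduct_mulVec_pos ht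
  have herr : ∀ ω, (t ⬝ᵥ Γ⁻¹ *ᵥ (ϑ • t - G ω)) / D - ϑ = -(y ⬝ᵥ G ω) / D := fun ω => by
    rw [mulVec_sub, mulVec_smul, dotProduct_sub, dotProduct_smul, smul_eq_mul,
      dotProduct_mulVec_comm hΓ.inv.isHermitian t (G ω), dotProduct_comm (G ω)]
    field_simp
    ring
  simp_rw [herr, div_pow, neg_sq]
  rw [integral_div, integral_sq_dotProduct hint hcov, hΓ.mulVec_inv_mulVec, dotProduct_comm]
  change D / D ^ 2 = D⁻¹
  field_simp

end QuadraticForm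

section RpowKernel

variable {α : ℝ}

lemma integrableOn_one_sub_cos_mul_mul_rpow (hα0 : 0 < α) (hα2 : α < 2) (r : ℝ) :
    IntegrableOn (fun u => (1 - cos (r * u)) * u ^ (-1 - α)) (Ioi 0) := by
  have hmeas : AEStronglyMeasurable (fun u : ℝ => (1 - cos (r * u)) * u ^ (-1 - α))
      (volume.restrict (Ioi 0)) := by
    apply Measurable.aestronglyMeasurable
    fun_prop
  have hnorm : ∀ u, 0 < u → ‖(1 - cos (r * u)) * u ^ (-1 - α)‖
      = (1 - cos (r * u)) * u ^ (-1 - α) := fun u hu =>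
    Real.norm_of_nonneg (mul_nonneg (by linarith [cos_le_one (r * u)]) (rpow_nonneg hu.le _))
  -- near `0` use `1 - cos (r u) ≤ (r u)² / 2`, near `∞` use `1 - cos (r u) ≤ 2`
  have hsmall : IntegrableOn (fun u => (1 - cos (r * u)) * u ^ (-1 - α)) (Ioc 0 1) := by
    have hdom : IntegrableOn (fun u : ℝ => r ^ 2 / 2 * u ^ (1 - α)) (Ioc 0 1) := by
      have := (intervalIntegral.intervalIntegrable_rpow' (a := 0) (b := 1)
        (r := 1 - α) (by linarith)).const_mul (r ^ 2 / 2)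
      rwa [intervalIntegrable_iff, uIoc_of_le zero_le_one] at this
    refine hdom.integrable.mono'
      (hmeas.mono_measure (Measure.restrict_mono Ioc_subset_Ioi_self le_rfl)) ?_
    filter_upwards [ae_restrict_mem measurableSet_Ioc] with u hu
    have hu0 : 0 < u := hu.1
    rw [hnorm u hu0]
    calc (1 - cos (r * u)) * u ^ (-1 - α) ≤ (r * u) ^ 2 / 2 * u ^ (-1 - α) := by
          gcongr
          nlinarith [one_sub_sq_div_two_le_cos (x := r * u)]
      _ = r ^ 2 / 2 * (u ^ (2 : ℝ) * u ^ (-1 - α)) := by rw [rpow_two]; ring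
      _ = r ^ 2 / 2 * u ^ (1 - α) := by rw [← rpow_add hu0]; ring_nf
  have hlarge : IntegrableOn (fun u => (1 - cos (r * u)) * u ^ (-1 - α)) (Ioi 1) := by
    have hdom : IntegrableOn (fun u : ℝ => 2 * u ^ (-1 - α)) (Ioi 1) :=
      (integrableOn_Ioi_rpow_of_lt (by linarith) one_pos).const_mul 2
    refine hdom.integrable.mono'
      (hmeas.mono_measure (Measure.restrict_mono (Ioi_subset_Ioi zero_le_one) le_rfl)) ?_
    filter_upwards [ae_restrict_mem measurableSet_Ioi] with u hu
    have hu0 : 0 < u := one_pos.trans hu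
    rw [hnorm u hu0]
    gcongr
    linarith [neg_one_le_cos (r * u)]
  rw [← Ioc_union_Ioi_eq_Ioi zero_le_one]
  exact hsmall.union hlarge

lemma integral_one_sub_cos_mul_mul_rpow (hα0 : 0 < α) (r : ℝ) :
    ∫ u in Ioi (0 : ℝ), (1 - cos (r * u)) * u ^ (-1 - α)
      = |r| ^ α * ∫ u in Ioi (0 : ℝ), (1 - cos u) * u ^ (-1 - α) := by
  have habs : ∀ u, cos (r * u) = cos (|r| * u) := fun u => by
    rcases abs_choice r with h | h <;> simp [h]
  simp_rw [habs]
  rcases (abs_nonneg r).eq_or_lt with h | hpos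
  · simp [← h, zero_rpow hα0.ne']
  set s := |r|
  -- substitute `v = s u`
  have hscale : ∀ u ∈ Ioi (0 : ℝ), (1 - cos (s * u)) * u ^ (-1 - α)
      = s ^ (1 + α) * ((1 - cos (s * u)) * (s * u) ^ (-1 - α)) := fun u hu => by
    rw [mul_rpow hpos.le (le_of_lt hu), show s ^ (1 + α) * ((1 - cos (s * u)) *
      (s ^ (-1 - α) * u ^ (-1 - α))) = s ^ (1 + α) * s ^ (-1 - α) * ((1 - cos (s * u)) *
      u ^ (-1 - α)) by ring, ← rpow_add hpos]
    simp
  rw [setIntegral_congr_fun measurableSet_Ioi hscale, integral_const_mul,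
    integral_comp_mul_left_Ioi (fun v => (1 - cos v) * v ^ (-1 - α)) 0 hpos, mul_zero,
    smul_eq_mul, ← mul_assoc, ← rpow_neg_one s, ← rpow_add hpos]
  ring_nf

lemma integral_one_sub_cos_mul_rpow_pos (hα0 : 0 < α) (hα2 : α < 2) :
    0 < ∫ u in Ioi (0 : ℝ), (1 - cos u) * u ^ (-1 - α) := by
  have hint := integrableOn_one_sub_cos_mul_mul_rpow hα0 hα2 1
  simp only [one_mul] at hint
  have hnonneg : 0 ≤ᵐ[volume.restrict (Ioi 0)] fun u => (1 - cos u) * u ^ (-1 - α) := by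
    filter_upwards [ae_restrict_mem measurableSet_Ioi] with u hu
    exact mul_nonneg (by linarith [cos_le_one u]) (rpow_nonneg (le_of_lt hu) _)
  rw [setIntegral_pos_iff_support_of_nonneg_ae hnonneg hint]
  -- the integrand is positive on `(1, 3) ⊆ (0, π)`
  refine lt_of_lt_of_le (by simp [volume_Ioo]) (measure_mono (?_ : Ioo (1 : ℝ) 3 ⊆ _))
  rintro u ⟨hu1, hu3⟩
  have hu0 : (0 : ℝ) < u := one_pos.trans hu1
  have hcos : cos u < 1 := by
    simpa using cos_lt_cos_of_nonneg_of_le_pi le_rfl (hu3.trans pi_gt_three).le hu0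
  exact ⟨(mul_pos (by linarith) (rpow_pos_of_pos hu0 _)).ne', hu0⟩

lemma sum_sum_mul_one_sub_cos_kernel {ι : Type*} [Fintype ι] (x a : ι → ℝ) :
    ∑ i, ∑ j, x i * x j * ((1 - cos (a i)) + (1 - cos (a j)) - (1 - cos (a i - a j)))
      = (∑ i, x i * (1 - cos (a i))) ^ 2 + (∑ i, x i * sin (a i)) ^ 2 := by
  simp only [sq, Finset.sum_mul_sum, ← Finset.sum_add_distrib, cos_sub]
  exact Finset.sum_congr rfl fun i _ => Finset.sum_congr rfl fun j _ => by ring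

/-- Twice the covariance matrix of fractional Brownian motion with Hurst index `α / 2` at the
times `t`. -/
noncomputable def rpowKernel {ι : Type*} (α : ℝ) (t : ι → ℝ) : Matrix ι ι ℝ :=
  Matrix.of fun i j => |t i| ^ α + |t j| ^ α - |t i - t j| ^ α

lemma integrableOn_one_sub_cos_kernel_mul_rpow (hα0 : 0 < α) (hα2 : α < 2) (a b : ℝ) :
    IntegrableOn (fun u => ((1 - cos (a * u)) + (1 - cos (b * u)) - (1 - cos (a * u - b * u)))
      * u ^ (-1 - α)) (Ioi 0) := by
  have hf := integrableOn_one_sub_cos_mul_mul_rpow hα0 hα2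
  refine (((hf a).add (hf b)).sub (hf (a - b))).congr_fun (fun u _ => ?_) measurableSet_Ioi
  simp only [Pi.add_apply, Pi.sub_apply, sub_mul a b u]
  ring

lemma rpowKernel_apply_mul_integral {ι : Type*} (hα0 : 0 < α) (hα2 : α < 2) (t : ι → ℝ)
    (i j : ι) :
    rpowKernel α t i j * ∫ u in Ioi (0 : ℝ), (1 - cos u) * u ^ (-1 - α)
      = ∫ u in Ioi (0 : ℝ), ((1 - cos (t i * u)) + (1 - cos (t j * u))
          - (1 - cos (t i * u - t j * u))) * u ^ (-1 - α) := by
  have hf := integrableOn_one_sub_cos_mul_mul_rpow hα0 hα2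
  have hsplit : ∀ u, ((1 - cos (t i * u)) + (1 - cos (t j * u))
      - (1 - cos (t i * u - t j * u))) * u ^ (-1 - α)
      = (1 - cos (t i * u)) * u ^ (-1 - α) + (1 - cos (t j * u)) * u ^ (-1 - α)
        - (1 - cos ((t i - t j) * u)) * u ^ (-1 - α) := fun u => by
    rw [sub_mul (t i) (t j) u]
    ring
  simp_rw [hsplit]
  rw [integral_sub (f := fun u => (1 - cos (t i * u)) * u ^ (-1 - α)
      + (1 - cos (t j * u)) * u ^ (-1 - α)) ((hf _).add (hf _)) (hf _),
    integral_add (hf _) (hf _)]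
  simp only [integral_one_sub_cos_mul_mul_rpow hα0, rpowKernel, of_apply]
  ring

lemma posSemidef_rpowKernel {ι : Type*} [Fintype ι] (hα0 : 0 < α) (hα2 : α < 2) (t : ι → ℝ) :
    (rpowKernel α t).PosSemidef := by
  refine PosSemidef.of_dotProduct_mulVec_nonneg ?_ fun x => ?_
  · ext i j
    simp [rpowKernel, abs_sub_comm, add_comm]
  set g : ℝ → ℝ → ℝ → ℝ := fun a b u =>
    ((1 - cos (a * u)) + (1 - cos (b * u)) - (1 - cos (a * u - b * u))) * u ^ (-1 - α)
  have hint : ∀ i j, IntegrableOn (fun u => x i * x j * g (t i) (t j) u) (Ioi 0) :=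
    fun i j => (integrableOn_one_sub_cos_kernel_mul_rpow hα0 hα2 _ _).const_mul _
  have hform : (star x ⬝ᵥ rpowKernel α t *ᵥ x) * ∫ u in Ioi (0 : ℝ), (1 - cos u) * u ^ (-1 - α)
      = ∫ u in Ioi 0, ∑ i, ∑ j, x i * x j * g (t i) (t j) u := by
    rw [integral_finsetSum _ fun i _ => integrable_finsetSum _ fun j _ => hint i j,
      dotProduct_mulVec_eq_sum, Finset.sum_mul]
    refine Finset.sum_congr rfl fun i _ => ?_
    rw [integral_finsetSum _ fun j _ => hint i j, Finset.sum_mul]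
    refine Finset.sum_congr rfl fun j _ => ?_
    rw [integral_const_mul, ← rpowKernel_apply_mul_integral hα0 hα2, star_trivial]
    ring
  have hnonneg : 0 ≤ ∫ u in Ioi 0, ∑ i, ∑ j, x i * x j * g (t i) (t j) u := by
    refine setIntegral_nonneg measurableSet_Ioi fun u hu => ?_
    have hsum : ∑ i, ∑ j, x i * x j * g (t i) (t j) u
        = ((∑ i, x i * (1 - cos (t i * u))) ^ 2 + (∑ i, x i * sin (t i * u)) ^ 2)
          * u ^ (-1 - α) := by
      simp only [g, ← sum_sum_mul_one_sub_cos_kernel x (fun i => t i * u), Finset.sum_mul,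
        mul_assoc]
    rw [hsum]
    have := rpow_nonneg (le_of_lt (show (0 : ℝ) < u from hu)) (-1 - α)
    positivity
  exact nonneg_of_mul_nonneg_left (hform ▸ hnonneg) (integral_one_sub_cos_mul_rpow_pos hα0 hα2)

end RpowKernel

noncomputable def brownianCov (n : ℕ) : Matrix (Fin n) (Fin n) ℝ :=
  Matrix.of fun i j => min ((i : ℝ) + 1) ((j : ℝ) + 1)

lemma brownianCov_eq_mul_transpose (n : ℕ) :
    brownianCov n = (Matrix.of fun i k : Fin n => if k ≤ i then (1 : ℝ) else 0) *
      (Matrix.of fun i k : Fin n => if k ≤ i then (1 : ℝ) else 0)ᵀ := by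
  ext i j
  have hcard : (Finset.univ.filter fun k : Fin n => k ≤ i ∧ k ≤ j) = Finset.Iic (min i j) := by
    ext k
    simp
  simp only [brownianCov, of_apply, mul_apply, transpose_apply, mul_ite, mul_one, mul_zero,
    ← ite_and, Finset.sum_boole, and_comm (a := _ ≤ j), hcard, Fin.card_Iic]
  push_cast [Fin.coe_min]
  exact min_add_add_right (i : ℝ) j 1

lemma posDef_brownianCov (n : ℕ) : (brownianCov n).PosDef := by
  rw [brownianCov_eq_mul_transpose, ← conjTranspose_eq_transpose_of_trivial]
  refine PosDef.mul_conjTranspose_self _ (vecMul_injective_iff_isUnit.mpr ?_)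
  rw [isUnit_iff_isUnit_det, det_of_isLowerTriangular]
  · simp
  · intro i k hik
    simp [not_le.mpr (show i < k from hik)]

/-- The covariance matrix of `σ W + B^H` at the times `h, 2h, …, nh`. -/
noncomputable def mixedFBmCov (σ h H : ℝ) (n : ℕ) : Matrix (Fin n) (Fin n) ℝ :=
  Matrix.of fun i j => σ ^ 2 * h * (min ((i : ℝ) + 1) ((j : ℝ) + 1)) +
    (1 / 2) * h ^ (2 * H) *
      (((i : ℝ) + 1) ^ (2 * H) + ((j : ℝ) + 1) ^ (2 * H) - |(i : ℝ) - (j : ℝ)| ^ (2 * H))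

def samplingTimes (h : ℝ) (n : ℕ) : Fin n → ℝ := fun k => ((k : ℝ) + 1) * h

lemma sum_fin_cast_add_one_le (n : ℕ) : ∑ k : Fin n, ((k : ℝ) + 1) ≤ (n : ℝ) ^ 2 := by
  induction n with
  | zero => simp
  | succ m ih =>
    rw [Fin.sum_univ_castSucc]
    push_cast [Fin.val_castSucc, Fin.val_last]
    nlinarith

lemma le_sum_fin_cast_add_one_sq (n : ℕ) : (n : ℝ) ^ 3 / 3 ≤ ∑ k : Fin n, ((k : ℝ) + 1) ^ 2 := by
  induction n with
  | zero => simp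
  | succ m ih =>
    rw [Fin.sum_univ_castSucc]
    push_cast [Fin.val_castSucc, Fin.val_last]
    nlinarith [(Nat.cast_nonneg m : (0 : ℝ) ≤ m)]

lemma tendsto_const_mul_natCast_rpow_atTop_zero {p : ℝ} (hp : p < 0) (c : ℝ) :
    Tendsto (fun n : ℕ => c * (n : ℝ) ^ p) atTop (nhds 0) := by
  have := (tendsto_rpow_neg_atTop (neg_pos.mpr hp)).comp tendsto_natCast_atTop_atTop
  simpa [Function.comp_def] using this.const_mul c

section MixedFBm

variable {σ h H : ℝ}

lemma mixedFBmCov_eq (n : ℕ) :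
    mixedFBmCov σ h H n = (σ ^ 2 * h) • brownianCov n +
      (1 / 2 * h ^ (2 * H)) • rpowKernel (2 * H) (fun i : Fin n => (i : ℝ) + 1) := by
  ext i j
  simp only [mixedFBmCov, brownianCov, rpowKernel, of_apply, Matrix.add_apply, Matrix.smul_apply,
    smul_eq_mul, add_sub_add_right_eq_sub]
  rw [abs_of_pos (by positivity : (0 : ℝ) < i + 1), abs_of_pos (by positivity : (0 : ℝ) < j + 1)]

lemma posDef_mixedFBmCov (hσ : 0 < σ) (hh : 0 < h) (hH0 : 0 < H) (hH1 : H < 1) (n : ℕ) :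
    (mixedFBmCov σ h H n).PosDef := by
  rw [mixedFBmCov_eq]
  exact ((posDef_brownianCov n).smul (by positivity)).add_posSemidef
    ((posSemidef_rpowKernel (by linarith) (by linarith) _).smul (by positivity))

lemma mixedFBmCov_apply_le (hh : 0 < h) (hH : 1 / 2 ≤ H) {n : ℕ} (i j : Fin n) :
    mixedFBmCov σ h H n i j ≤ (σ ^ 2 * h + h ^ (2 * H)) * (n : ℝ) ^ (2 * H) := by
  have hn : ∀ k : Fin n, (k : ℝ) + 1 ≤ n := fun k => by exact_mod_cast k.isLt
  have hn1 : (1 : ℝ) ≤ n := le_trans (by simp) (hn i)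
  have hpow : ∀ k : Fin n, ((k : ℝ) + 1) ^ (2 * H) ≤ (n : ℝ) ^ (2 * H) := fun k =>
    rpow_le_rpow (by positivity) (hn k) (by linarith)
  have hmin : min ((i : ℝ) + 1) ((j : ℝ) + 1) ≤ (n : ℝ) ^ (2 * H) :=
    (min_le_left _ _).trans <| (hn i).trans <| self_le_rpow_of_one_le hn1 (by linarith)
  have hσh : 0 ≤ σ ^ 2 * h := by positivity
  have hhH : 0 < h ^ (2 * H) := rpow_pos_of_pos hh _
  have := rpow_nonneg (abs_nonneg ((i : ℝ) - j)) (2 * H)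
  simp only [mixedFBmCov, of_apply]
  nlinarith [mul_le_mul_of_nonneg_left hmin hσh, hpow i, hpow j]

lemma dotProduct_mixedFBmCov_mulVec_div_le (hh : 0 < h) (hH : 1 / 2 ≤ H) {n : ℕ} (hn : 1 ≤ n) :
    (samplingTimes h n ⬝ᵥ mixedFBmCov σ h H n *ᵥ samplingTimes h n) /
        (samplingTimes h n ⬝ᵥ samplingTimes h n) ^ 2
      ≤ 9 * (σ ^ 2 * h + h ^ (2 * H)) * h ^ (-(2 : ℝ)) * (n : ℝ) ^ (2 * H - 2) := by
  set t := samplingTimes h n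
  set K := σ ^ 2 * h + h ^ (2 * H)
  have hn0 : (0 : ℝ) < n := by exact_mod_cast hn
  have hK : 0 < K := by positivity
  have ht : ∀ k, 0 ≤ t k := fun k => mul_nonneg (by positivity) hh.le
  have hsum : ∑ k, t k ≤ h * (n : ℝ) ^ 2 := by
    simpa [t, samplingTimes, ← Finset.sum_mul, mul_comm h]
      using mul_le_mul_of_nonneg_right (sum_fin_cast_add_one_le n) hh.le
  have hQ : t ⬝ᵥ mixedFBmCov σ h H n *ᵥ t ≤ K * (n : ℝ) ^ (2 * H) * (h * (n : ℝ) ^ 2) ^ 2 := by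
    refine (dotProduct_mulVec_le_of_apply_le ht (mixedFBmCov_apply_le hh hH)).trans ?_
    gcongr
    exact Finset.sum_nonneg fun k _ => ht k
  have hN : h ^ 2 * ((n : ℝ) ^ 3 / 3) ≤ t ⬝ᵥ t := by
    have : t ⬝ᵥ t = h ^ 2 * ∑ k : Fin n, ((k : ℝ) + 1) ^ 2 := by
      simp only [t, samplingTimes, dotProduct, Finset.mul_sum]
      exact Finset.sum_congr rfl fun k _ => by ring
    rw [this]
    gcongr
    exact le_sum_fin_cast_add_one_sq n
  calc (t ⬝ᵥ mixedFBmCov σ h H n *ᵥ t) / (t ⬝ᵥ t) ^ 2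
      ≤ K * (n : ℝ) ^ (2 * H) * (h * (n : ℝ) ^ 2) ^ 2 / (h ^ 2 * ((n : ℝ) ^ 3 / 3)) ^ 2 :=
        div_le_div₀ (by positivity) hQ (by positivity) (by gcongr)
    _ = 9 * K * h ^ (-(2 : ℝ)) * (n : ℝ) ^ (2 * H - 2) := by
        rw [rpow_neg hh.le, rpow_sub hn0, rpow_two, rpow_two]
        field_simp
        ring

end MixedFBm

/-- Mean-square convergence of the discrete MLE of the drift: for the mixed-fBm
covariance matrix `Γ` and sampling times `t_i = i·h`, the variance of the MLE is bounded
by `C h⁻² n^{2H−2}`, which tends to `0` as `n → ∞`. -/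
theorem stmt_16 (σ h H : ℝ) (hσ : 0 < σ) (hh : 0 < h) (hH1 : 1/2 < H) (hH2 : H < 1) :
    ∃ C > (0 : ℝ),
      (∀ (n : ℕ), 1 ≤ n →
        ∀ {Ω : Type} [MeasurableSpace Ω] (μ : Measure Ω) [IsProbabilityMeasure μ]
          (G : Ω → Fin n → ℝ) (ϑ : ℝ) (Γ : Matrix (Fin n) (Fin n) ℝ),
          (∀ i j : Fin n, Γ i j =
            σ ^ 2 * h * (min ((i : ℝ) + 1) ((j : ℝ) + 1)) +
              (1 / 2) * h ^ (2 * H) *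
                (((i : ℝ) + 1) ^ (2 * H) + ((j : ℝ) + 1) ^ (2 * H)
                  - |(i : ℝ) - (j : ℝ)| ^ (2 * H))) →
          (∀ i, ∫ ω, G ω i ∂μ = 0) →
          (∀ i j, ∫ ω, G ω i * G ω j ∂μ = Γ i j) →
          (∀ i, Integrable (fun ω => G ω i) μ) →
          (∀ i j, Integrable (fun ω => G ω i * G ω j) μ) →
          ∫ ω, (((fun k : Fin n => ((k : ℝ) + 1) * h) ⬝ᵥ
                  (Γ⁻¹ *ᵥ fun i => ϑ * ((i : ℝ) + 1) * h - G ω i)) /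
                ((fun k : Fin n => ((k : ℝ) + 1) * h) ⬝ᵥ
                  (Γ⁻¹ *ᵥ fun k : Fin n => ((k : ℝ) + 1) * h)) - ϑ) ^ 2 ∂μ ≤
            C * h ^ (-(2 : ℝ)) * (n : ℝ) ^ (2 * H - 2)) ∧
      Tendsto (fun n : ℕ => C * h ^ (-(2 : ℝ)) * (n : ℝ) ^ (2 * H - 2)) atTop (nhds 0) := by
  refine ⟨9 * (σ ^ 2 * h + h ^ (2 * H)), by positivity, ?_,
    tendsto_const_mul_natCast_rpow_atTop_zero (by linarith) _⟩
  intro n hn Ω _ μ _ G ϑ Γ hΓ _ hcov _ hint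
  obtain rfl : Γ = mixedFBmCov σ h H n := Matrix.ext hΓ
  have hpos := posDef_mixedFBmCov hσ hh (by linarith) hH2 n
  have ht : samplingTimes h n ≠ 0 := fun h0 => by
    simpa [samplingTimes, hh.ne'] using congrFun h0 ⟨0, hn⟩
  have hobs : ∀ ω, (fun i : Fin n => ϑ * ((i : ℝ) + 1) * h - G ω i)
      = ϑ • samplingTimes h n - G ω := fun ω => by
    ext i
    simp only [samplingTimes, Pi.sub_apply, Pi.smul_apply, smul_eq_mul]
    ring
  simp_rw [hobs]
  calc _ = (samplingTimes h n ⬝ᵥ (mixedFBmCov σ h H n)⁻¹ *ᵥ samplingTimes h n)⁻¹ :=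
        integral_sq_gls_sub_eq_inv hpos ht hint hcov ϑ
    _ ≤ _ := (hpos.inv_dotProduct_inv_mulVec_le ht).trans
        (dotProduct_mixedFBmCov_mulVec_div_le hh hH1.le hn)
end
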